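/- Contragredient duality: if q is a queue and u is a word of length n with ℓ classes, then (q(u))* = q*(u*); that is, for all sites i, q(u)_i = ℓ + 2 − q*(u*)_{n+1−i}. -/

import Mathlib

/-! Reflect the ring of sites by `i ↦ n + 1 - i` and complement the letters by `x ↦ ℓ + 2 - x`.
The reflection turns "the first free site weakly to the right" into "the first free site weakly
to the left", and the complement reverses the order of the letters. Hence Phase II of `q` acting
on `u` (the `|q|` smallest letters, placed rightwards on `q`) becomes, step by step, Phase I of
`q*` acting on `u*` (the `|q|` largest letters, placed leftwards on the complement of `q*`, which is
the reflection of `q`). In the same way Phase I of `q` becomes Phase II of `q*`. Each phase fills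
every site of its set, so the letter at a site is set by exactly one phase.
-/

open scoped BigOperators Classical

namespace MLQ

/-- Words of length `n` over the positive integers (letters are natural numbers,
with `0` unused). Sites are elements of `Fin n`, thought of cyclically. -/
abbrev Word (n : ℕ) := Fin n → ℕ

variable {n : ℕ}

section Cyclic

variable [NeZero n]

/-- the site `s` steps (cyclically) to the right of `i` -/
def shiftR (i : Fin n) (s : ℕ) : Fin n :=
  ⟨(i.val + s) % n, Nat.mod_lt _ (Nat.pos_of_ne_zero (NeZero.ne n))⟩

/-- the site `s` steps (cyclically) to the left of `i` -/
def shiftL (i : Fin n) (s : ℕ) : Fin n :=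
  ⟨(i.val + n - s % n) % n, Nat.mod_lt _ (Nat.pos_of_ne_zero (NeZero.ne n))⟩

/-- number of steps to go (cyclically) right from `i` to `j` -/
def cdistR (i j : Fin n) : ℕ := (j.val + n - i.val) % n

/-- number of steps to go (cyclically) left from `i` to `j` -/
def cdistL (i j : Fin n) : ℕ := (i.val + n - j.val) % n

/-- first site of `s` weakly to the right (cyclically) of `i` -/
noncomputable def firstRight (i : Fin n) (s : Finset (Fin n)) (h : s.Nonempty) : Fin n :=
  shiftR i ((s.image (cdistR i)).min' (h.image _))

/-- first site of `s` weakly to the left (cyclically) of `i` -/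
noncomputable def firstLeft (i : Fin n) (s : Finset (Fin n)) (h : s.Nonempty) : Fin n :=
  shiftL i ((s.image (cdistL i)).min' (h.image _))

/-- One step of Phase II of the queue algorithm: the state consists of the set of
still-unset sites of the queue together with the partial output word; processing
the letter at site `σ p`, it is placed (unchanged) on the first unset queue site
weakly to the right of `σ p`. -/
noncomputable def step2 (u : Word n) (σ : Equiv.Perm (Fin n))
    (st : Finset (Fin n) × Word n) (p : Fin n) : Finset (Fin n) × Word n :=
  if h : st.1.Nonempty then
    let j := firstRight (σ p) st.1 h
    (st.1.erase j, Function.update st.2 j (u (σ p)))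
  else st

/-- One step of Phase I of the queue algorithm: processing the letter at site `σ p`,
the letter `u (σ p) + 1` is placed on the first unset non-queue site weakly to the
left of `σ p`. -/
noncomputable def step1 (u : Word n) (σ : Equiv.Perm (Fin n))
    (st : Finset (Fin n) × Word n) (p : Fin n) : Finset (Fin n) × Word n :=
  if h : st.1.Nonempty then
    let j := firstLeft (σ p) st.1 h
    (st.1.erase j, Function.update st.2 j (u (σ p) + 1))
  else st

/-- The two-phase queue algorithm computing `q(u)`, using the ordering permutation `σ`
(so the letters are processed in the order `u (σ 0), u (σ 1), …`): Phase II processes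
the `|q|` smallest letters in increasing order, Phase I processes the remaining
letters in decreasing order. -/
noncomputable def queueActWith (q : Finset (Fin n)) (σ : Equiv.Perm (Fin n))
    (u : Word n) : Word n :=
  let s2 := ((List.finRange n).take q.card).foldl (step2 u σ) (q, fun _ => 0)
  let s1 := (((List.finRange n).drop q.card).reverse).foldl (step1 u σ) (qᶜ, s2.2)
  s1.2

/-- `σ` is a valid ordering permutation for the word `u`. -/
def IsSorting (u : Word n) (σ : Equiv.Perm (Fin n)) : Prop := Monotone (u ∘ σ)

/-- The action `q(u)` of a queue `q` on a word `u`, using the canonical sorting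
permutation. -/
noncomputable def act (q : Finset (Fin n)) (u : Word n) : Word n :=
  queueActWith q (Tuple.sort u) u

/-- The action of a tuple of queues `(q_1, …, q_k)` on a word (first `q_1`, then `q_2`, …). -/
noncomputable def mlqAct {k : ℕ} (qs : Fin k → Finset (Fin n)) (u : Word n) : Word n :=
  (List.ofFn qs).foldl (fun w q => act q w) u

end Cyclic

/-- the type of a word: `typeOf u i` is the number of occurrences of the letter `i`. -/
def typeOf (u : Word n) : ℕ → ℕ := fun i => (Finset.univ.filter (fun p => u p = i)).card

/-- partial sums `p_i(m) = m_1 + ⋯ + m_i` of a type -/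
def psum (m : ℕ → ℕ) (i : ℕ) : ℕ := ∑ j ∈ Finset.Icc 1 i, m j

/-- number of classes of a type: the largest `i` with `m i ≠ 0` -/
noncomputable def classes (m : ℕ → ℕ) : ℕ := sSup {i | m i ≠ 0}

/-- a packed word: all classes `1, …, ℓ` occur, where `ℓ` is the number of classes -/
def PackedWord (u : Word n) : Prop :=
  (∀ p, 1 ≤ u p) ∧ ∀ j, 1 ≤ j → j ≤ classes (typeOf u) → typeOf u j ≠ 0

/-- merging classes `i` and `i+1` in a word: all letters `> i` are decremented -/
def mergeWord (i : ℕ) (u : Word n) : Word n := fun p => if i < u p then u p - 1 else u p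

/-- merging classes `i` and `i+1` in a type -/
def mergeType (i : ℕ) (m : ℕ → ℕ) : ℕ → ℕ := fun j =>
  if j < i then m j else if j = i then m i + m (i + 1) else m (j + 1)

/-- `∨^(k)`: decrement all but the `k` smallest letters of a word (meaningful when
`k` is a partial sum of the type of the word). -/
def vee (k : ℕ) (u : Word n) : Word n := fun p =>
  if (Finset.univ.filter (fun q => u q ≤ u p)).card ≤ k then u p else u p - 1

/-- iterated merge `∨_T` (the merges `∨_t` are applied for `t ∈ T` in decreasing order) -/
def mergeWordT (T : Finset ℕ) (u : Word n) : Word n :=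
  (T.sort (· ≤ ·)).foldr mergeWord u

/-- iterated merge `∨_T` on types -/
def mergeTypeT (T : Finset ℕ) (m : ℕ → ℕ) : ℕ → ℕ :=
  (T.sort (· ≤ ·)).foldr mergeType m

/-- the weight of a queue, `∏_{j ∈ q} x_j` -/
noncomputable def qwt (q : Finset (Fin n)) : MvPolynomial (Fin n) ℤ :=
  ∏ j ∈ q, MvPolynomial.X j

/-- the `σ`-twisted spectral weight `⟨u⟩_σ` of a word `u`, with respect to a type `m`
with `k + 1` classes: the sum of the weights of all `σ`-twisted multiline queues
`(q_1, …, q_k)` of type `m` (i.e. `|q_i| = p_{σ(i)}(m)`) with `u = q(1^n)`. -/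
noncomputable def swt [NeZero n] (k : ℕ) (m : ℕ → ℕ) (σ : Equiv.Perm (Fin k))
    (u : Word n) : MvPolynomial (Fin n) ℤ :=
  ∑ qs ∈ Finset.univ.filter (fun qs : Fin k → Finset (Fin n) =>
      (∀ i, (qs i).card = psum m ((σ i : ℕ) + 1)) ∧ mlqAct qs (fun _ => 1) = u),
    ∏ i, qwt (qs i)

/-- the (ordinary) spectral weight `⟨u⟩` of a packed word -/
noncomputable def spec [NeZero n] (u : Word n) : MvPolynomial (Fin n) ℤ :=
  swt (classes (typeOf u) - 1) (typeOf u) (Equiv.refl _) u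

/-- the elementary symmetric polynomial `e_k(x_1, …, x_n)` -/
noncomputable def esym (n k : ℕ) : MvPolynomial (Fin n) ℤ :=
  ∑ t ∈ Finset.powersetCard k (Finset.univ : Finset (Fin n)), ∏ j ∈ t, MvPolynomial.X j

/-- the Gale order `A ⪰ B`: same cardinality, and the `k`-th largest element of `A`
is at least the `k`-th largest element of `B`, for every `k` -/
def Dom (A B : Finset ℕ) : Prop :=
  A.card = B.card ∧ ∀ k < A.card,
    (B.sort (· ≤ ·)).reverse.getD k 0 ≤ (A.sort (· ≤ ·)).reverse.getD k 0

/-- `A ≫ B`: every element of `A` exceeds every element of `B` -/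
def Gg (A B : Finset ℕ) : Prop := ∀ a ∈ A, ∀ b ∈ B, b < a

/-- a word is weakly decreasing up to level `t`: any two sites `p < q` with
`u q ≤ t` satisfy `u p ≥ u q` -/
def WDUpTo (t : ℕ) (u : Word n) : Prop :=
  ∀ p q : Fin n, p < q → u q ≤ t → u q ≤ u p

section Dual

variable [NeZero n]

/-- the cyclic interval `{i, i+1, …, i+t}` -/
def cycInterval (i : Fin n) (t : ℕ) : Finset (Fin n) :=
  (Finset.range (t + 1)).image (shiftR i)

/-- the cyclic interval starting at `i` of length `t` is balanced for the
configuration `(q₁, q₂)` -/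
def BalancedInterval (q1 q2 : Finset (Fin n)) (i : Fin n) (t : ℕ) : Prop :=
  (cycInterval i t ∩ q1).card = (cycInterval i t ∩ q2).card ∧
  ∀ l ≤ t, (cycInterval i l ∩ q2).card ≤ (cycInterval i l ∩ q1).card

/-- a site is balanced if it lies in some balanced interval; equivalently, its
parenthesis (if any) is matched in the cyclic parenthesis-matching of the
configuration -/
def BalancedSite (q1 q2 : Finset (Fin n)) (j : Fin n) : Prop :=
  ∃ i t, t < n ∧ BalancedInterval q1 q2 i t ∧ j ∈ cycInterval i t

/-- the dual configuration: balanced sites keep their memberships, unbalanced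
sites swap their memberships between the two queues -/
noncomputable def dualPair (q1 q2 : Finset (Fin n)) : Finset (Fin n) × Finset (Fin n) :=
  (Finset.univ.filter (fun j => if BalancedSite q1 q2 j then j ∈ q1 else j ∈ q2),
   Finset.univ.filter (fun j => if BalancedSite q1 q2 j then j ∈ q2 else j ∈ q1))

/-- the operator `s_i` on tuples of queues, replacing the (0-indexed) adjacent pair
`(q_i, q_{i+1})` by its dual configuration -/
noncomputable def sOp {k : ℕ} (i : ℕ) (qs : Fin k → Finset (Fin n)) :
    Fin k → Finset (Fin n) := fun j =>
  if h : i + 1 < k then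
    (if j.val = i then (dualPair (qs ⟨i, by omega⟩) (qs ⟨i + 1, h⟩)).1
     else if j.val = i + 1 then (dualPair (qs ⟨i, by omega⟩) (qs ⟨i + 1, h⟩)).2
     else qs j)
  else qs j

end Dual


/-- the site `n + 1 - i` (in one-indexed terms): reflection through the middle of `[n]` -/
def rev {n : ℕ} (i : Fin n) : Fin n := ⟨n - 1 - i.val, by have := i.isLt; omega⟩

/-- the contragredient dual queue: `i ∈ q*` iff `n + 1 - i ∉ q` -/
def dualQueue {n : ℕ} (q : Finset (Fin n)) : Finset (Fin n) :=
  Finset.univ.filter (fun i => rev i ∉ q)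

/-- the contragredient dual word (of a word with `ℓ` classes): `u*_i = ℓ + 1 - u_{n+1-i}` -/
def dualWord {n : ℕ} (ℓ : ℕ) (u : Word n) : Word n := fun i => ℓ + 1 - u (rev i)

section Reflection

variable {n : ℕ}

lemma rev_eq_finRev : (rev : Fin n → Fin n) = Fin.rev := by
  funext i
  ext
  simp only [rev, Fin.val_rev]
  omega

lemma mem_dualQueue {q : Finset (Fin n)} {i : Fin n} : i ∈ dualQueue q ↔ i.rev ∉ q := by
  simp [dualQueue, rev_eq_finRev]

lemma mem_image_rev {S : Finset (Fin n)} {j : Fin n} : j ∈ S.image Fin.rev ↔ j.rev ∈ S := by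
  simp [Finset.mem_image, Fin.rev_eq_iff]

lemma dualQueue_eq_image_compl (q : Finset (Fin n)) : dualQueue q = qᶜ.image Fin.rev := by
  ext j
  rw [mem_image_rev, Finset.mem_compl, mem_dualQueue]

lemma compl_dualQueue (q : Finset (Fin n)) : (dualQueue q)ᶜ = q.image Fin.rev := by
  ext j
  rw [Finset.mem_compl, mem_image_rev, mem_dualQueue, not_not]

lemma card_dualQueue (q : Finset (Fin n)) : (dualQueue q).card = n - q.card := by
  rw [dualQueue_eq_image_compl, Finset.card_image_of_injective _ Fin.rev_injective,
    Finset.card_compl, Fintype.card_fin]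

lemma map_rev_take_finRange (k : ℕ) :
    ((List.finRange n).take k).map Fin.rev = ((List.finRange n).drop (n - k)).reverse := by
  rw [List.map_take, ← List.finRange_reverse, List.take_reverse, List.length_finRange]

/-- Reflection reverses the order of the sites and, as `x ↦ ℓ + 1 - x` is strictly antitone on
the letters, their order too, so ties are still broken from left to right. -/
lemma sort_dualWord {ℓ : ℕ} {u : Word n} (hu : ∀ p, u p ≤ ℓ + 1) (p : Fin n) :
    Tuple.sort (dualWord ℓ u) p = (Tuple.sort u p.rev).rev := by
  set σ := Tuple.sort u
  obtain ⟨hmono, hties⟩ := Tuple.eq_sort_iff.mp (rfl : σ = Tuple.sort u)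
  have hw : ∀ p : Fin n, dualWord ℓ u (σ p.rev).rev = ℓ + 1 - u (σ p.rev) := by
    simp [dualWord, rev_eq_finRev]
  suffices h : Fin.revPerm.trans (σ.trans Fin.revPerm) = Tuple.sort (dualWord ℓ u) by
    rw [← h]; rfl
  refine Tuple.eq_sort_iff.mpr ⟨fun a b (hab : a ≤ b) => ?_, fun a b (hab : a < b) heq => ?_⟩
  · simp only [Function.comp_apply, Equiv.trans_apply, Fin.revPerm_apply, hw]
    exact Nat.sub_le_sub_left (hmono (Fin.rev_le_rev.mpr hab)) _
  · simp only [Equiv.trans_apply, Fin.revPerm_apply, hw] at heq ⊢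
    have := hu (σ a.rev); have := hu (σ b.rev)
    exact Fin.rev_lt_rev.mpr (hties _ _ (Fin.rev_lt_rev.mpr hab) (by omega))

lemma map_conj_rev {σ τ : Equiv.Perm (Fin n)} (hτ : ∀ p, τ p = (σ p.rev).rev) (L : List (Fin n)) :
    L.map τ = ((L.map Fin.rev).map σ).map Fin.rev := by
  simp only [List.map_map]
  exact List.map_congr_left (fun p _ => hτ p)

lemma cdistL_rev (p j : Fin n) : cdistL p.rev j.rev = cdistR p j := by
  simp only [cdistL, cdistR, Fin.val_rev]
  congr 1
  omega

lemma cdistR_rev (p j : Fin n) : cdistR p.rev j.rev = cdistL p j := by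
  rw [← cdistL_rev, Fin.rev_rev, Fin.rev_rev]

end Reflection

section Cyclic

variable {n : ℕ} [NeZero n]

lemma rev_shiftR (p : Fin n) (d : ℕ) : (shiftR p d).rev = shiftL p.rev d := by
  have hn := Nat.pos_of_ne_zero (NeZero.ne n)
  have hp := p.isLt
  have hr : d % n < n := Nat.mod_lt _ hn
  ext
  simp only [shiftR, shiftL, Fin.val_rev]
  rw [← Nat.add_mod_mod p.val d n]
  generalize d % n = r at *
  rcases lt_or_ge (p + r) n with h | h
  · rw [Nat.mod_eq_of_lt h, Nat.mod_eq_sub_mod (by omega), Nat.mod_eq_of_lt (by omega)]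
    omega
  · rw [Nat.mod_eq_sub_mod h, Nat.mod_eq_of_lt (by omega), Nat.mod_eq_of_lt (by omega)]
    omega

lemma rev_shiftL (p : Fin n) (d : ℕ) : (shiftL p d).rev = shiftR p.rev d := by
  rw [← Fin.rev_rev (shiftR _ d), rev_shiftR, Fin.rev_rev]

lemma firstLeft_image_rev (p : Fin n) (S : Finset (Fin n)) (h : S.Nonempty) :
    firstLeft p.rev (S.image Fin.rev) (h.image _) = (firstRight p S h).rev := by
  simp only [firstLeft, firstRight, rev_shiftR, Finset.image_image, Function.comp_def,
    cdistL_rev]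

lemma firstRight_image_rev (p : Fin n) (S : Finset (Fin n)) (h : S.Nonempty) :
    firstRight p.rev (S.image Fin.rev) (h.image _) = (firstLeft p S h).rev := by
  simp only [firstLeft, firstRight, rev_shiftL, Finset.image_image, Function.comp_def,
    cdistR_rev]

lemma shiftR_cdistR (p j : Fin n) : shiftR p (cdistR p j) = j := by
  have hp := p.isLt
  have hj := j.isLt
  ext
  simp only [shiftR, cdistR]
  rw [Nat.add_mod_mod, show p.val + (j.val + n - p.val) = j.val + n by omega,
    Nat.add_mod_right, Nat.mod_eq_of_lt hj]

lemma shiftL_cdistL (p j : Fin n) : shiftL p (cdistL p j) = j := by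
  rw [← Fin.rev_rev (shiftL _ _), rev_shiftL, ← cdistR_rev, shiftR_cdistR, Fin.rev_rev]

lemma firstRight_mem (p : Fin n) (S : Finset (Fin n)) (h : S.Nonempty) :
    firstRight p S h ∈ S := by
  obtain ⟨j, hj, hd⟩ := Finset.mem_image.mp (Finset.min'_mem (S.image (cdistR p)) (h.image _))
  rwa [firstRight, ← hd, shiftR_cdistR]

lemma firstLeft_mem (p : Fin n) (S : Finset (Fin n)) (h : S.Nonempty) :
    firstLeft p S h ∈ S := by
  obtain ⟨j, hj, hd⟩ := Finset.mem_image.mp (Finset.min'_mem (S.image (cdistL p)) (h.image _))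
  rwa [firstLeft, ← hd, shiftL_cdistL]

end Cyclic

section Fill

variable {n : ℕ} (pick : Fin n → (S : Finset (Fin n)) → S.Nonempty → Fin n) (f : Word n)

/-- The common shape of `step1` and `step2`, the steps of the two phases of the queue algorithm. -/
noncomputable def fillStep (st : Finset (Fin n) × Word n) (j : Fin n) :
    Finset (Fin n) × Word n :=
  if h : st.1.Nonempty then
    (st.1.erase (pick j st.1 h), Function.update st.2 (pick j st.1 h) (f j))
  else st

noncomputable def fill (L : List (Fin n)) (S : Finset (Fin n)) : Word n :=
  (L.foldl (fillStep pick f) (S, 0)).2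

variable {pick f}

lemma fillStep_of_nonempty {S : Finset (Fin n)} (h : S.Nonempty) (v : Word n) (j : Fin n) :
    fillStep pick f (S, v) j = (S.erase (pick j S h), Function.update v (pick j S h) (f j)) :=
  dif_pos h

lemma fillStep_of_empty (v : Word n) (j : Fin n) : fillStep pick f (∅, v) j = (∅, v) :=
  dif_neg Finset.not_nonempty_empty

lemma foldl_fillStep_le {m : ℕ} (hf : ∀ j, f j ≤ m) (L : List (Fin n)) (S : Finset (Fin n))
    {v : Word n} (hv : ∀ j, v j ≤ m) (j : Fin n) : (L.foldl (fillStep pick f) (S, v)).2 j ≤ m := by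
  induction L generalizing S v with
  | nil => exact hv j
  | cons a L ih =>
    rcases S.eq_empty_or_nonempty with rfl | h
    · rw [List.foldl_cons, fillStep_of_empty]
      exact ih ∅ hv
    · rw [List.foldl_cons, fillStep_of_nonempty h]
      refine ih _ (fun k => ?_)
      rw [Function.update_apply]
      split_ifs
      exacts [hf a, hv k]

variable (hmem : ∀ j S h, pick j S h ∈ S)
include hmem

lemma foldl_fillStep_apply_of_notMem (L : List (Fin n)) {S : Finset (Fin n)} {j : Fin n}
    (hj : j ∉ S) (v : Word n) : (L.foldl (fillStep pick f) (S, v)).2 j = v j := by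
  induction L generalizing S v with
  | nil => rfl
  | cons a L ih =>
    rcases S.eq_empty_or_nonempty with rfl | h
    · rw [List.foldl_cons, fillStep_of_empty, ih hj]
    · rw [List.foldl_cons, fillStep_of_nonempty h, ih (fun hj' => hj (Finset.mem_of_mem_erase hj')),
        Function.update_of_ne (fun hja : j = _ => hj (hja ▸ hmem a S h))]

lemma card_foldl_fillStep (L : List (Fin n)) {S : Finset (Fin n)} (hL : L.length ≤ S.card)
    (v : Word n) : (L.foldl (fillStep pick f) (S, v)).1.card + L.length = S.card := by
  induction L generalizing S v with
  | nil => rfl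
  | cons a L ih =>
    rw [List.length_cons] at hL
    have h : S.Nonempty := Finset.card_pos.mp (by omega)
    have hcard := Finset.card_erase_of_mem (hmem a S h)
    rw [List.foldl_cons, fillStep_of_nonempty h, List.length_cons, ← add_assoc,
      ih (by omega)]
    omega

lemma foldl_fillStep_apply_eq (L : List (Fin n)) {S : Finset (Fin n)} {j : Fin n} (hjS : j ∈ S)
    (v v' : Word n) (hj : j ∉ (L.foldl (fillStep pick f) (S, v)).1) :
    (L.foldl (fillStep pick f) (S, v)).2 j = (L.foldl (fillStep pick f) (S, v')).2 j := by
  induction L generalizing S v v' with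
  | nil => exact absurd hjS hj
  | cons a L ih =>
    have h : S.Nonempty := ⟨j, hjS⟩
    simp only [List.foldl_cons, fillStep_of_nonempty h] at hj ⊢
    by_cases hja : j = pick a S h
    · subst hja
      simp [foldl_fillStep_apply_of_notMem hmem]
    · exact ih (Finset.mem_erase.mpr ⟨hja, hjS⟩) _ _ hj

/-- With as many letters as sites, every site of `S` gets filled, overwriting `v` there. -/
lemma foldl_fillStep_of_length_eq (L : List (Fin n)) {S : Finset (Fin n)} (hL : L.length = S.card)
    (v : Word n) : (L.foldl (fillStep pick f) (S, v)).2 = S.piecewise (fill pick f L S) v := by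
  have hfull : (L.foldl (fillStep pick f) (S, v)).1 = ∅ := by
    have := card_foldl_fillStep hmem L hL.le v (f := f)
    exact Finset.card_eq_zero.mp (by omega)
  ext j
  by_cases hj : j ∈ S
  · rw [Finset.piecewise_eq_of_mem _ _ _ hj, fill,
      foldl_fillStep_apply_eq hmem L hj v 0 (by simp [hfull])]
  · rw [Finset.piecewise_eq_of_notMem _ _ _ hj, foldl_fillStep_apply_of_notMem hmem L hj]

end Fill

section Mirror

variable {n : ℕ} {pick pick' : Fin n → (S : Finset (Fin n)) → S.Nonempty → Fin n} {f g : Word n}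
  {c : ℕ}

def mirror (c : ℕ) (st : Finset (Fin n) × Word n) : Finset (Fin n) × Word n :=
  (st.1.image Fin.rev, fun j => c - st.2 j.rev)

variable (hrev : ∀ p S h, pick' p.rev (S.image Fin.rev) (h.image _) = (pick p S h).rev)
  (hfg : ∀ p, g p.rev = c - f p)
include hrev hfg

lemma fillStep_mirror (st : Finset (Fin n) × Word n) (p : Fin n) :
    fillStep pick' g (mirror c st) p.rev = mirror c (fillStep pick f st p) := by
  obtain ⟨S, v⟩ := st
  rcases S.eq_empty_or_nonempty with rfl | h
  · simp only [mirror, Finset.image_empty, fillStep_of_empty]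
  · simp only [mirror]
    rw [fillStep_of_nonempty (h.image Fin.rev), fillStep_of_nonempty h, hrev p S h,
      Finset.image_erase Fin.rev_injective, hfg]
    congr 1
    funext j
    simp only [Function.update_apply, ← Fin.rev_eq_iff]
    split_ifs <;> rfl

lemma foldl_fillStep_mirror (L : List (Fin n)) (st : Finset (Fin n) × Word n) :
    (L.map Fin.rev).foldl (fillStep pick' g) (mirror c st) =
      mirror c (L.foldl (fillStep pick f) st) := by
  induction L generalizing st with
  | nil => rfl
  | cons a L ih => rw [List.map_cons, List.foldl_cons, List.foldl_cons,
      fillStep_mirror hrev hfg, ih]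

lemma fill_mirror (hmem : ∀ j S h, pick' j S h ∈ S) {L : List (Fin n)} {S : Finset (Fin n)}
    (hL : L.length = S.card) {j : Fin n} (hj : j ∈ S) :
    fill pick' g (L.map Fin.rev) (S.image Fin.rev) j.rev = c - fill pick f L S j := by
  have hL' : (L.map Fin.rev).length = (S.image Fin.rev).card := by
    rw [List.length_map, Finset.card_image_of_injective _ Fin.rev_injective, hL]
  have hinit : (S.image Fin.rev, fun _ => c) = mirror c (S, 0) := by
    simp [mirror]
  calc fill pick' g (L.map Fin.rev) (S.image Fin.rev) j.rev
      = ((L.map Fin.rev).foldl (fillStep pick' g) (S.image Fin.rev, fun _ => c)).2 j.rev := by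
        rw [foldl_fillStep_of_length_eq hmem _ hL', Finset.piecewise_eq_of_mem]
        rwa [mem_image_rev, Fin.rev_rev]
    _ = c - fill pick f L S j := by
        rw [hinit, foldl_fillStep_mirror hrev hfg]
        simp [mirror, fill]

end Mirror

section Queue

variable {n : ℕ} [NeZero n]

noncomputable def phaseTwo (q : Finset (Fin n)) (σ : Equiv.Perm (Fin n)) (u : Word n) : Word n :=
  fill firstRight u (((List.finRange n).take q.card).map σ) q

noncomputable def phaseOne (q : Finset (Fin n)) (σ : Equiv.Perm (Fin n)) (u : Word n) : Word n :=
  fill firstLeft (fun j => u j + 1) ((((List.finRange n).drop q.card).reverse).map σ) qᶜ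

/-- Phase I starts from the output of Phase II, but only overwrites the sites outside `q`. -/
lemma queueActWith_eq_piecewise (q : Finset (Fin n)) (σ : Equiv.Perm (Fin n)) (u : Word n) :
    queueActWith q σ u = q.piecewise (phaseTwo q σ u) (phaseOne q σ u) := by
  have hq : q.card ≤ n := by simpa using q.card_le_univ
  have hstep2 : ∀ (L : List (Fin n)) (init : Finset (Fin n) × Word n),
      L.foldl (step2 u σ) init = (L.map σ).foldl (fillStep firstRight u) init :=
    fun L init => by rw [List.foldl_map]; rfl
  have hstep1 : ∀ (L : List (Fin n)) (init : Finset (Fin n) × Word n),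
      L.foldl (step1 u σ) init = (L.map σ).foldl (fillStep firstLeft (fun j => u j + 1)) init :=
    fun L init => by rw [List.foldl_map]; rfl
  simp only [queueActWith, hstep1, hstep2]
  rw [foldl_fillStep_of_length_eq firstLeft_mem _ (by simp [Finset.card_compl]),
    foldl_fillStep_of_length_eq firstRight_mem _ (by simpa using hq)]
  ext i
  by_cases hi : i ∈ q <;> simp [phaseOne, phaseTwo, hi]

lemma queueActWith_le (q : Finset (Fin n)) (σ : Equiv.Perm (Fin n)) {u : Word n} {m : ℕ}
    (hu : ∀ p, u p ≤ m) (i : Fin n) : queueActWith q σ u i ≤ m + 1 := by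
  rw [queueActWith_eq_piecewise]
  by_cases hi : i ∈ q
  · rw [Finset.piecewise_eq_of_mem _ _ _ hi]
    exact foldl_fillStep_le (fun j => (hu j).trans m.le_succ) _ _ (fun _ => Nat.zero_le _) i
  · rw [Finset.piecewise_eq_of_notMem _ _ _ hi]
    exact foldl_fillStep_le (fun j => Nat.succ_le_succ (hu j)) _ _ (fun _ => Nat.zero_le _) i

variable {q : Finset (Fin n)} {σ τ : Equiv.Perm (Fin n)} {u w : Word n} {m : ℕ}
  (hτ : ∀ p, τ p = (σ p.rev).rev) (hw : ∀ p, w p.rev + u p = m)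
include hτ hw

lemma phaseOne_dualQueue {i : Fin n} (hi : i ∈ q) :
    phaseOne (dualQueue q) τ w i.rev = m + 1 - phaseTwo q σ u i := by
  have hq : q.card ≤ n := by simpa using q.card_le_univ
  have hsites : (((List.finRange n).drop (n - q.card)).reverse).map τ =
      (((List.finRange n).take q.card).map σ).map Fin.rev := by
    rw [map_conj_rev hτ, ← map_rev_take_finRange]
    simp only [List.map_map, Function.comp_def, Fin.rev_rev]
  rw [phaseOne, phaseTwo, card_dualQueue, compl_dualQueue, hsites]
  exact fill_mirror firstLeft_image_rev (fun p => by have := hw p; omega) firstLeft_mem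
    (by simpa using hq) hi

lemma phaseTwo_dualQueue {i : Fin n} (hi : i ∉ q) :
    phaseTwo (dualQueue q) τ w i.rev = m + 1 - phaseOne q σ u i := by
  have hq : q.card ≤ n := by simpa using q.card_le_univ
  have hsites : ((List.finRange n).take (n - q.card)).map τ =
      ((((List.finRange n).drop q.card).reverse).map σ).map Fin.rev := by
    rw [map_conj_rev hτ, map_rev_take_finRange, Nat.sub_sub_self hq]
  rw [phaseOne, phaseTwo, card_dualQueue, hsites, dualQueue_eq_image_compl]
  exact fill_mirror firstRight_image_rev (fun p => by have := hw p; omega) firstRight_mem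
    (by simp [Finset.card_compl]) (Finset.mem_compl.mpr hi)

lemma queueActWith_dualQueue (i : Fin n) :
    queueActWith (dualQueue q) τ w i.rev = m + 1 - queueActWith q σ u i := by
  rw [queueActWith_eq_piecewise, queueActWith_eq_piecewise]
  by_cases hi : i ∈ q
  · have hi' : i.rev ∉ dualQueue q := by simpa [mem_dualQueue] using hi
    rw [Finset.piecewise_eq_of_notMem _ _ _ hi', Finset.piecewise_eq_of_mem _ _ _ hi,
      phaseOne_dualQueue hτ hw hi]
  · have hi' : i.rev ∈ dualQueue q := by simpa [mem_dualQueue] using hi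
    rw [Finset.piecewise_eq_of_mem _ _ _ hi', Finset.piecewise_eq_of_notMem _ _ _ hi,
      phaseTwo_dualQueue hτ hw hi]

end Queue

theorem contragredient_duality_general {n : ℕ} [NeZero n] (q : Finset (Fin n)) (ℓ : ℕ)
    (u : Word n) (hu : ∀ p, 1 ≤ u p ∧ u p ≤ ℓ) :
    ∀ i : Fin n, act q u i = ℓ + 2 - act (dualQueue q) (dualWord ℓ u) (rev i) := by
  intro i
  have hsort := sort_dualWord (fun p => (hu p).2.trans ℓ.le_succ)
  have hw : ∀ p, dualWord ℓ u p.rev + u p = ℓ + 1 := fun p => by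
    have := hu p
    simp only [dualWord, rev_eq_finRev, Fin.rev_rev]
    omega
  have hdual := queueActWith_dualQueue (q := q) hsort hw i
  have hle := queueActWith_le q (Tuple.sort u) (fun p => (hu p).2) i
  rw [rev_eq_finRev]
  unfold act
  omega

/-- Contragredient duality: `(q(u))* = q*(u*)`, i.e. `q(u)_i = ℓ + 2 - q*(u*)_{n+1-i}`
for every site `i`, where `u` is a word with `ℓ` classes. -/
theorem contragredient_duality {n : ℕ} [NeZero n] (q : Finset (Fin n)) (ℓ : ℕ)
    (u : Word n) (hu : ∀ p, 1 ≤ u p ∧ u p ≤ ℓ) (hℓ : ∃ p, u p = ℓ) :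
    ∀ i : Fin n, act q u i = ℓ + 2 - act (dualQueue q) (dualWord ℓ u) (rev i) :=
  contragredient_duality_general q ℓ u hu

end MLQ
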